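/- Reverse CBS inequality (Theorem 2.1): if a, A ∈ K and x, y, z ∈ X satisfy Re(Ay − x, x − ay | z) ≥ 0, then 0 ≤ ‖x|z‖²‖y|z‖² − |(x, y | z)|² ≤ (1/4)|A − a|² ‖y|z‖⁴. -/

import Mathlib

open RCLike

/-- A 2-inner product space over `𝕜 = ℝ` or `ℂ`. -/
structure TwoIP (𝕜 : Type) (X : Type) [RCLike 𝕜] [AddCommGroup X] [Module 𝕜 X] where
  ip : X → X → X → 𝕜
  re_nonneg : ∀ x z : X, 0 ≤ re (ip x x z)
  im_zero : ∀ x z : X, im (ip x x z) = 0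
  eq_zero_iff : ∀ x z : X, ip x x z = 0 ↔ ¬ LinearIndependent 𝕜 ![x, z]
  swap : ∀ x z : X, ip x x z = ip z z x
  conj_symm : ∀ x y z : X, ip x y z = (starRingEnd 𝕜) (ip y x z)
  smul_left : ∀ (α : 𝕜) (x y z : X), ip (α • x) y z = α * ip x y z
  add_left : ∀ x x' y z : X, ip (x + x') y z = ip x y z + ip x' y z

/-!
With `p = ‖x|z‖²`, `q = ‖y|z‖²`, `S = (x, y | z)`, the expansion of `(Ay - x, x - ay | z)` gives
the identity
`|A - a|² q² - 4 (p q - |S|²) = 4 q Re (Ay - x, x - ay | z) + |2 S - (A + a) q|²`,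
whose right-hand side is nonnegative under the hypothesis. The lower bound is the
Cauchy–Schwarz inequality for the semi-inner product `(·, · | z)`.
-/

open ComplexConjugate

theorem RCLike.norm_sub_sq_mul_sq_sub_four_mul {𝕜 : Type} [RCLike 𝕜] (a A S : 𝕜) (p q : ℝ) :
    ‖A - a‖ ^ 2 * q ^ 2 - 4 * (p * q - ‖S‖ ^ 2) =
      4 * q * re (A * conj S + conj a * S - A * conj a * q - p) + ‖2 * S - (A + a) * q‖ ^ 2 := by
  simp only [norm_sq_eq_def, map_sub, map_add, mul_re, mul_im, conj_re, conj_im, ofReal_re,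
    ofReal_im, ofNat_re, ofNat_im]
  ring

namespace TwoIP

variable {𝕜 X : Type} [RCLike 𝕜] [AddCommGroup X] [Module 𝕜 X] (T : TwoIP 𝕜 X)

theorem add_right (u v w z : X) : T.ip u (v + w) z = T.ip u v z + T.ip u w z := by
  rw [T.conj_symm, T.add_left, map_add, ← T.conj_symm, ← T.conj_symm]

theorem smul_right (α : 𝕜) (u v z : X) : T.ip u (α • v) z = conj α * T.ip u v z := by
  rw [T.conj_symm, T.smul_left, map_mul, ← T.conj_symm]

theorem sub_left (u v w z : X) : T.ip (u - v) w z = T.ip u w z - T.ip v w z := by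
  rw [eq_sub_iff_add_eq, ← T.add_left, sub_add_cancel]

theorem sub_right (u v w z : X) : T.ip u (v - w) z = T.ip u v z - T.ip u w z := by
  rw [T.conj_symm, T.sub_left, map_sub, ← T.conj_symm, ← T.conj_symm]

theorem ofReal_re_ip_self (x z : X) : (re (T.ip x x z) : 𝕜) = T.ip x x z :=
  conj_eq_iff_re.mp (conj_eq_iff_im.mpr (T.im_zero x z))

/-- The arguments are swapped because mathlib's inner product is conjugate-linear in the first
one. -/
abbrev core (z : X) : PreInnerProductSpace.Core 𝕜 X where
  inner u v := T.ip v u z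
  conj_inner_symm u v := (T.conj_symm v u z).symm
  re_inner_nonneg u := T.re_nonneg u z
  add_left u v w := T.add_right w u v z
  smul_left u v r := T.smul_right r v u z

theorem norm_sq_ip_le (x y z : X) : ‖T.ip x y z‖ ^ 2 ≤ re (T.ip x x z) * re (T.ip y y z) := by
  have h : ‖T.ip x y z‖ * ‖T.ip y x z‖ ≤ re (T.ip y y z) * re (T.ip x x z) :=
    @InnerProductSpace.Core.inner_mul_inner_self_le 𝕜 X _ _ _ (T.core z) y x
  rw [T.conj_symm y x z, norm_conj, mul_comm (re _)] at h
  exact (sq _).trans_le h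

theorem ip_sub_smul_sub_smul (a A : 𝕜) (x y z : X) :
    T.ip (A • y - x) (x - a • y) z = A * conj (T.ip x y z) + conj a * T.ip x y z
      - A * conj a * T.ip y y z - T.ip x x z := by
  simp only [T.sub_left, T.sub_right, T.smul_left, T.smul_right, T.conj_symm y x z]
  ring

theorem re_mul_re_sub_norm_sq_ip_le (a A : 𝕜) (x y z : X)
    (h : 0 ≤ re (T.ip (A • y - x) (x - a • y) z)) :
    re (T.ip x x z) * re (T.ip y y z) - ‖T.ip x y z‖ ^ 2
      ≤ ‖A - a‖ ^ 2 / 4 * re (T.ip y y z) ^ 2 := by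
  have key := norm_sub_sq_mul_sq_sub_four_mul a A (T.ip x y z) (re (T.ip x x z)) (re (T.ip y y z))
  rw [T.ofReal_re_ip_self, T.ofReal_re_ip_self, ← T.ip_sub_smul_sub_smul] at key
  linarith [mul_nonneg (T.re_nonneg y z) h, sq_nonneg ‖2 * T.ip x y z - (A + a) * T.ip y y z‖]

end TwoIP

theorem stmt_general {𝕜 X : Type} [RCLike 𝕜] [AddCommGroup X] [Module 𝕜 X]
    (T : TwoIP 𝕜 X) (x y z : X) (a A : 𝕜)
    (h : 0 ≤ re (T.ip (A • y - x) (x - a • y) z)) :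
    0 ≤ Real.sqrt (re (T.ip x x z)) ^ 2 * Real.sqrt (re (T.ip y y z)) ^ 2 - ‖T.ip x y z‖ ^ 2 ∧
    Real.sqrt (re (T.ip x x z)) ^ 2 * Real.sqrt (re (T.ip y y z)) ^ 2 - ‖T.ip x y z‖ ^ 2
      ≤ (1/4) * ‖A - a‖ ^ 2 * Real.sqrt (re (T.ip y y z)) ^ 4 := by
  have hy4 : Real.sqrt (re (T.ip y y z)) ^ 4 = re (T.ip y y z) ^ 2 := by
    rw [show 4 = 2 * 2 from rfl, pow_mul, Real.sq_sqrt (T.re_nonneg y z)]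
  rw [Real.sq_sqrt (T.re_nonneg x z), Real.sq_sqrt (T.re_nonneg y z), hy4]
  exact ⟨sub_nonneg.mpr (T.norm_sq_ip_le x y z),
    by linarith [T.re_mul_re_sub_norm_sq_ip_le a A x y z h]⟩

theorem stmt {𝕜 X : Type} [RCLike 𝕜] [AddCommGroup X] [Module 𝕜 X]
    (T : TwoIP 𝕜 X) (hdim : 1 < Module.rank 𝕜 X) (x y z : X) (a A : 𝕜)
    (h : 0 ≤ re (T.ip (A • y - x) (x - a • y) z)) :
    0 ≤ Real.sqrt (re (T.ip x x z)) ^ 2 * Real.sqrt (re (T.ip y y z)) ^ 2 - ‖T.ip x y z‖ ^ 2 ∧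
    Real.sqrt (re (T.ip x x z)) ^ 2 * Real.sqrt (re (T.ip y y z)) ^ 2 - ‖T.ip x y z‖ ^ 2
      ≤ (1/4) * ‖A - a‖ ^ 2 * Real.sqrt (re (T.ip y y z)) ^ 4 :=
  stmt_general T x y z a A h
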